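/- arXiv:1705.05594 — 4 statements merged into one kernel-verified Lean document; each statement's English description precedes it below -/
import Mathlib

section
/- For every prime p, every nonzero complex number y, and every integer n ≥ 2, the algebraic identity (1 + y^{−2^{n−1}}) · (1 + ∑_{m=1}^{2^{n−1}−1} 1/(p·y^m·(1+1/p)) − 1/(y^{2^{n−1}}·(1+1/p))) = 1 + ∑_{m=1}^{2^n−1} 1/(p·y^m·(1+1/p)) − 1/(y^{2^n}·(1+1/p)) holds. -/
theorem local_factor_identity (p : ℕ) (hp : p.Prime) (y : ℂ) (hy : y ≠ 0)
    (n : ℕ) (hn : 2 ≤ n) :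
    (1 + y ^ (-(2 : ℤ) ^ (n - 1))) *
      (1 + ∑ m ∈ Finset.Icc 1 (2 ^ (n - 1) - 1),
            1 / ((p : ℂ) * y ^ m * (1 + 1 / (p : ℂ)))
         - 1 / (y ^ (2 ^ (n - 1)) * (1 + 1 / (p : ℂ))))
      = 1 + ∑ m ∈ Finset.Icc 1 (2 ^ n - 1),
              1 / ((p : ℂ) * y ^ m * (1 + 1 / (p : ℂ)))
          - 1 / (y ^ (2 ^ n) * (1 + 1 / (p : ℂ))) := by
  have hp0 : (p : ℂ) ≠ 0 := Nat.cast_ne_zero.2 hp.pos.ne'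
  have hpc : ((p : ℂ) + 1) ≠ 0 := by
    have h2 : (((p + 1 : ℕ)) : ℂ) ≠ 0 := Nat.cast_ne_zero.2 (by omega)
    push_cast at h2
    exact h2
  have hc : (1 + 1 / (p : ℂ)) ≠ 0 := by
    have h1 := hpc
    intro h
    apply h1
    field_simp at h
    linear_combination h
  set N := 2 ^ (n - 1) with hN
  have hN1 : 1 ≤ N := Nat.one_le_two_pow
  have h2n : 2 ^ n = 2 * N := by
    rw [hN, ← pow_succ']
    congr 1
    omega
  have hz : y ^ (-(2 : ℤ) ^ (n - 1)) = (y ^ N)⁻¹ := by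
    have : (-(2 : ℤ) ^ (n - 1)) = -(N : ℤ) := by push_cast [hN]; ring
    rw [this, zpow_neg, zpow_natCast]
  rw [hz, h2n]
  have hyN : y ^ N ≠ 0 := pow_ne_zero _ hy
  set f : ℕ → ℂ := fun m => 1 / ((p : ℂ) * y ^ m * (1 + 1 / (p : ℂ))) with hf
  have key : ∑ m ∈ Finset.Icc 1 (2 * N - 1), f m
      = (∑ m ∈ Finset.Icc 1 (N - 1), f m) + f N
        + (y ^ N)⁻¹ * ∑ m ∈ Finset.Icc 1 (N - 1), f m := by
    have e1 : Finset.Icc 1 (2 * N - 1) = Finset.Ioc 0 (2 * N - 1) := Finset.Icc_add_one_left_eq_Ioc 0 _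
    have e2 : Finset.Icc 1 (N - 1) = Finset.Ioc 0 (N - 1) := Finset.Icc_add_one_left_eq_Ioc 0 _
    rw [e1, e2, ← Finset.sum_Ioc_consecutive f (Nat.zero_le N) (by omega : N ≤ 2 * N - 1)]
    have e3 : ∑ m ∈ Finset.Ioc 0 N, f m = ∑ m ∈ Finset.Ioc 0 (N - 1), f m + f N := by
      have : N = (N - 1) + 1 := by omega
      rw [this, Finset.sum_Ioc_succ_top (Nat.zero_le _), Nat.add_sub_cancel]
    have e4 : ∑ m ∈ Finset.Ioc N (2 * N - 1), f m
        = (y ^ N)⁻¹ * ∑ m ∈ Finset.Ioc 0 (N - 1), f m := by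
      have hmap : Finset.Ioc N (2 * N - 1)
          = (Finset.Ioc 0 (N - 1)).map (addRightEmbedding N) := by
        rw [Finset.map_add_right_Ioc]
        congr 1 <;> omega
      rw [hmap, Finset.sum_map, Finset.mul_sum]
      refine Finset.sum_congr rfl fun m _ => ?_
      simp only [addRightEmbedding_apply, hf]
      rw [pow_add]
      field_simp [hp0, hpc, hyN, hy]
    rw [e3, e4]
  rw [key]
  have hrest : (y ^ N)⁻¹ - 1 / (y ^ N * (1 + 1 / (p : ℂ)))
      - (y ^ N)⁻¹ * (1 / (y ^ N * (1 + 1 / (p : ℂ))))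
      = f N - 1 / (y ^ (2 * N) * (1 + 1 / (p : ℂ))) := by
    simp only [hf]
    rw [two_mul, pow_add]
    field_simp [hp0, hpc, hyN, hy]
    ring
  linear_combination hrest
end

section
/- For Re s > 1, the Dirichlet series F(s) = ∑_{n≥1} (n/ψ(n)) n^{−s} satisfies F(s) = ζ(s)·ζ(2s+2)/ζ(s+1) · ∏_p (1 + 1/(p^{s+2}(1+1/p)) − 1/(p^{2s+2}(1+1/p))), where ζ is the Riemann zeta function. -/
open Complex

def dedekindPsi (n : ℕ) : ℤ :=
  ∑ d ∈ n.divisors, (d : ℤ) * (ArithmeticFunction.moebius (n / d)) ^ 2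

noncomputable def Fterm (s : ℂ) (n : ℕ) : ℂ :=
  if n = 0 then 0 else ((n : ℂ) / (dedekindPsi n : ℂ)) * (n : ℂ) ^ (-s)

/-! `n / ψ(n) · n^(-s)` is multiplicative in `n` and bounded by `n^(-s)`, so `F` has an Euler
product. Since `ψ(p^(e+1)) = p^e (p + 1)`, its factor at `p` is `1 + p/(p+1) · x/(1 - x)` with
`x = p^(-s)`. Dividing by the Euler factors of `ζ(s) ζ(2s+2) / ζ(s+1)` means multiplying by
`(1 - x)(1 + x/p)`, which leaves `(1 + x/p)(1 - x/(p+1)) = 1 + x/(p(p+1)) - x²/(p(p+1))`. -/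

open ArithmeticFunction

lemma norm_natCast_cpow_neg_lt_one {n : ℕ} (hn : 1 < n) {s : ℂ} (hs : 0 < s.re) :
    ‖(n : ℂ) ^ (-s)‖ < 1 := by
  rw [norm_natCast_cpow_of_pos (by omega), neg_re]
  exact Real.rpow_lt_one_of_one_lt_of_neg (by exact_mod_cast hn) (neg_neg_of_pos hs)

lemma dedekindPsi_eq_id_mul_moebius_sq (n : ℕ) :
    dedekindPsi n =
      ((ArithmeticFunction.id : ArithmeticFunction ℤ) * pmul moebius moebius) n := by
  rw [mul_apply, Nat.sum_divisorsAntidiagonal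
    ((ArithmeticFunction.id : ArithmeticFunction ℤ) · * pmul moebius moebius ·)]
  simp [dedekindPsi, sq]

lemma dedekindPsi_mul {m n : ℕ} (h : m.Coprime n) :
    dedekindPsi (m * n) = dedekindPsi m * dedekindPsi n := by
  have hmul := isMultiplicative_id.natCast.mul
    (isMultiplicative_moebius.pmul isMultiplicative_moebius)
  simp only [dedekindPsi_eq_id_mul_moebius_sq, hmul.map_mul_of_coprime h]

lemma dedekindPsi_prime_pow_succ {p : ℕ} (hp : p.Prime) (e : ℕ) :
    dedekindPsi (p ^ (e + 1)) = (p : ℤ) ^ e * (p + 1) := by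
  rw [dedekindPsi, Nat.sum_divisors_prime_pow hp, Finset.sum_range_succ, Finset.sum_range_succ,
    Finset.sum_eq_zero fun i hi => ?_]
  · rw [Nat.pow_div (Nat.le_add_right e 1) hp.pos, Nat.add_sub_cancel_left, pow_one,
      Nat.div_self (pow_pos hp.pos _), moebius_apply_prime hp, moebius_apply_one]
    push_cast
    ring
  · rw [Finset.mem_range] at hi
    rw [Nat.pow_div hi.le.step hp.pos, moebius_apply_prime_pow hp (by omega),
      if_neg (by omega)]
    ring

lemma le_dedekindPsi {n : ℕ} (hn : n ≠ 0) : (n : ℤ) ≤ dedekindPsi n := by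
  have h := Finset.single_le_sum (f := fun d : ℕ => (d : ℤ) * moebius (n / d) ^ 2)
    (fun d _ => by positivity) (Nat.mem_divisors_self n hn)
  rw [dedekindPsi]
  simpa [Nat.div_self (Nat.pos_of_ne_zero hn)] using h

lemma Fterm_one (s : ℂ) : Fterm s 1 = 1 := by
  simp [Fterm, dedekindPsi]

lemma Fterm_mul (s : ℂ) {m n : ℕ} (h : m.Coprime n) :
    Fterm s (m * n) = Fterm s m * Fterm s n := by
  rcases eq_or_ne m 0 with rfl | hm
  · simp [Fterm]
  rcases eq_or_ne n 0 with rfl | hn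
  · simp [Fterm]
  simp only [Fterm, mul_ne_zero hm hn, hm, hn, if_false, dedekindPsi_mul h, Nat.cast_mul,
    Int.cast_mul, natCast_mul_natCast_cpow]
  ring

lemma Fterm_prime_pow_succ (s : ℂ) {p : ℕ} (hp : p.Prime) (e : ℕ) :
    Fterm s (p ^ (e + 1)) = p / (p + 1) * ((p : ℂ) ^ (-s)) ^ (e + 1) := by
  have hp₀ : (p : ℂ) ≠ 0 := Nat.cast_ne_zero.mpr hp.ne_zero
  rw [Fterm, if_neg (pow_ne_zero _ hp.ne_zero), dedekindPsi_prime_pow_succ hp, Nat.cast_pow,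
    ← cpow_nat_mul, ← natCast_cpow_natCast_mul]
  push_cast
  field_simp
  ring

lemma norm_Fterm_le (s : ℂ) (n : ℕ) : ‖Fterm s n‖ ≤ ‖(n : ℂ) ^ (-s)‖ := by
  rcases eq_or_ne n 0 with rfl | hn
  · simp [Fterm]
  have hψ : (n : ℝ) ≤ dedekindPsi n := by exact_mod_cast le_dedekindPsi hn
  have hn₀ : (0 : ℝ) < n := by exact_mod_cast Nat.pos_of_ne_zero hn
  rw [Fterm, if_neg hn, norm_mul, norm_div, norm_natCast, norm_intCast,
    abs_of_pos (hn₀.trans_le hψ)]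
  exact mul_le_of_le_one_left (norm_nonneg _) (div_le_one_of_le₀ hψ (hn₀.le.trans hψ))

lemma summable_norm_Fterm {s : ℂ} (hs : 1 < s.re) : Summable (‖Fterm s ·‖) :=
  (summable_riemannZetaSummand hs).of_nonneg_of_le (fun _ => norm_nonneg _) (norm_Fterm_le s)

lemma tsum_Fterm_prime_pow {s : ℂ} (hs : 0 < s.re) {p : ℕ} (hp : p.Prime) :
    ∑' e, Fterm s (p ^ e) =
      1 + p / (p + 1) * ((p : ℂ) ^ (-s) * (1 - (p : ℂ) ^ (-s))⁻¹) := by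
  have hgeom := hasSum_geometric_of_norm_lt_one (norm_natCast_cpow_neg_lt_one hp.one_lt hs)
  have htail : HasSum (fun e => Fterm s (p ^ (e + 1)))
      (p / (p + 1) * ((p : ℂ) ^ (-s) * (1 - (p : ℂ) ^ (-s))⁻¹)) := by
    have h := (hgeom.mul_left ((p : ℂ) ^ (-s))).mul_left ((p : ℂ) / (p + 1))
    simp only [← pow_succ'] at h
    simpa only [Fterm_prime_pow_succ s hp] using h
  rw [(HasSum.zero_add (f := fun e => Fterm s (p ^ e)) htail).tsum_eq, pow_zero, Fterm_one]

lemma euler_factor_identity {x P : ℂ} (hx₁ : x ≠ 1) (hxP : x ≠ P) (hP : P ≠ 0)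
    (hP₁ : P + 1 ≠ 0) :
    (1 - x) * (1 - (x / P) ^ 2) * (1 - x / P)⁻¹ * (1 + P / (P + 1) * (x * (1 - x)⁻¹)) =
      1 + 1 / (P ^ 2 / x * (1 + 1 / P)) - 1 / (P ^ 2 / x ^ 2 * (1 + 1 / P)) := by
  have h1 : 1 - x ≠ 0 := sub_ne_zero.mpr hx₁.symm
  have h2 : P - x ≠ 0 := sub_ne_zero.mpr hxP.symm
  field_simp
  ring

lemma euler_factor_eq {s : ℂ} (hs : 0 < s.re) {p : ℕ} (hp : p.Prime) :
    (1 - (p : ℂ) ^ (-s)) * (1 - (p : ℂ) ^ (-(2 * s + 2))) * (1 - (p : ℂ) ^ (-(s + 1)))⁻¹ *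
        (1 + p / (p + 1) * ((p : ℂ) ^ (-s) * (1 - (p : ℂ) ^ (-s))⁻¹)) =
      1 + 1 / ((p : ℂ) ^ (s + 2) * (1 + 1 / (p : ℂ)))
        - 1 / ((p : ℂ) ^ (2 * s + 2) * (1 + 1 / (p : ℂ))) := by
  set x := (p : ℂ) ^ (-s) with hx
  have hp₀ : (p : ℂ) ≠ 0 := Nat.cast_ne_zero.mpr hp.ne_zero
  have hx_lt : ‖x‖ < 1 := norm_natCast_cpow_neg_lt_one hp.one_lt hs
  have hx₁ : x ≠ 1 := ne_of_apply_ne norm (by simpa using hx_lt.ne)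
  have hxP : x ≠ p := ne_of_apply_ne norm <| by
    rw [norm_natCast]; exact (hx_lt.trans (by exact_mod_cast hp.one_lt)).ne
  have hP₁ : (p : ℂ) + 1 ≠ 0 := by exact_mod_cast p.succ_ne_zero
  have e1 : (p : ℂ) ^ (-(s + 1)) = x / p := by
    rw [neg_add, cpow_add _ _ hp₀, cpow_neg_one, div_eq_mul_inv]
  have e2 : (p : ℂ) ^ (-(2 * s + 2)) = (x / p) ^ 2 := by
    rw [show -(2 * s + 2) = -(s + 1) + -(s + 1) by ring, cpow_add _ _ hp₀, e1, sq]
  have e3 : (p : ℂ) ^ (s + 2) = p ^ 2 / x := by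
    rw [cpow_add _ _ hp₀, cpow_two, hx, cpow_neg, div_inv_eq_mul, mul_comm]
  have e4 : (p : ℂ) ^ (2 * s + 2) = p ^ 2 / x ^ 2 := by
    rw [cpow_add _ _ hp₀, cpow_two, hx, cpow_neg, inv_pow, div_inv_eq_mul, mul_comm,
      ← cpow_nat_mul]
    norm_num
  rw [e1, e2, e3, e4]
  exact euler_factor_identity hx₁ hxP hp₀ hP₁

lemma hasProd_tsum_Fterm {s : ℂ} (hs : 1 < s.re) :
    HasProd
      (fun p : Nat.Primes => 1 + p / (p + 1) * ((p : ℂ) ^ (-s) * (1 - (p : ℂ) ^ (-s))⁻¹))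
      (∑' n, Fterm s n) := by
  have h := EulerProduct.eulerProduct_hasProd (Fterm_one s) (fun h => Fterm_mul s h)
    (summable_norm_Fterm hs) (by simp [Fterm])
  rwa [funext fun p : Nat.Primes => tsum_Fterm_prime_pow (zero_lt_one.trans hs) p.prop] at h

theorem F_factorization (s : ℂ) (hs : 1 < s.re) :
    ∑' n : ℕ, Fterm s n =
      riemannZeta s * riemannZeta (2 * s + 2) / riemannZeta (s + 1) *
        ∏' p : Nat.Primes,
          (1 + 1 / ((p : ℂ) ^ (s + 2) * (1 + 1 / (p : ℂ)))
             - 1 / ((p : ℂ) ^ (2 * s + 2) * (1 + 1 / (p : ℂ)))) := by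
  have hs₁ : 1 < (s + 1).re := by rw [add_re, one_re]; linarith
  have hs₂ : 1 < (2 * s + 2).re := by
    simp only [add_re, mul_re, re_ofNat, im_ofNat, zero_mul, sub_zero]; linarith
  have hζ₀ := riemannZeta_ne_zero_of_one_lt_re hs
  have hζ₁ := riemannZeta_ne_zero_of_one_lt_re hs₁
  have hζ₂ := riemannZeta_ne_zero_of_one_lt_re hs₂
  have h := ((((riemannZeta_eulerProduct_hasProd hs).inv₀ hζ₀).mul
    ((riemannZeta_eulerProduct_hasProd hs₂).inv₀ hζ₂)).mul
    (riemannZeta_eulerProduct_hasProd hs₁)).mul (hasProd_tsum_Fterm hs)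
  simp only [inv_inv] at h
  rw [← tprod_congr fun p : Nat.Primes => euler_factor_eq (zero_lt_one.trans hs) p.prop,
    h.tprod_eq]
  grind
end

section
/- For every integer n ≥ 1, the infinite product h_n(s) = ∏_p (1 + ∑_{m=1}^{2^n−1} 1/(p^{ms+m+1}(1+1/p)) − 1/(p^{2^n s + 2^n}(1+1/p))) converges absolutely for every complex s with Re s > −1 + 2^{−n}. -/
/-! Every factor minus one is a finite signed sum of terms `1 / (p ^ w * (1 + 1 / p))` of size
at most `p ^ (-Re w)`. For the terms with `m ≥ 1` one has `Re w = m (Re s + 1) + 1 > 1`, and for the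
last term `Re w = 2 ^ n (Re s + 1) > 1`, which is exactly the hypothesis on `s`. Hence the factors
minus one are absolutely summable over the primes, which makes the product converge. -/

open Complex

/-- The Euler factor of `h_n` at prime `p`. -/
noncomputable def hFactor (n : ℕ) (s : ℂ) (p : Nat.Primes) : ℂ :=
  1 + ∑ m ∈ Finset.Icc 1 (2 ^ n - 1 : ℕ),
        1 / ((p : ℂ) ^ ((m : ℂ) * s + (m : ℂ) + 1) * (1 + 1 / (p : ℂ)))
    - 1 / ((p : ℂ) ^ ((2 : ℂ) ^ n * s + (2 : ℂ) ^ n) * (1 + 1 / (p : ℂ)))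

lemma Nat.Primes.one_le_norm_one_add_inv (p : Nat.Primes) : 1 ≤ ‖1 + 1 / (p : ℂ)‖ := by
  have hre : (1 + 1 / (p : ℂ)).re = 1 + 1 / (p : ℝ) := by
    rw [← ofReal_natCast, ← ofReal_one, ← ofReal_div, ← ofReal_add, ofReal_re]
  calc (1 : ℝ) ≤ 1 + 1 / (p : ℝ) := le_add_of_nonneg_right (by positivity)
    _ = (1 + 1 / (p : ℂ)).re := hre.symm
    _ ≤ _ := re_le_norm _

lemma Nat.Primes.summable_one_div_cpow_mul_one_add_inv {w : ℂ} (hw : 1 < w.re) :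
    Summable fun p : Nat.Primes => 1 / ((p : ℂ) ^ w * (1 + 1 / (p : ℂ))) := by
  refine .of_norm_bounded (g := fun p : Nat.Primes => (p : ℝ) ^ (-w.re))
    (Nat.Primes.summable_rpow.mpr (by linarith)) fun p => ?_
  have hp : (0 : ℝ) < p := by exact_mod_cast p.prop.pos
  rw [norm_div, norm_one, norm_mul, norm_natCast_cpow_of_pos p.prop.pos, Real.rpow_neg hp.le,
    ← one_div]
  exact one_div_le_one_div_of_le (by positivity)
    (le_mul_of_one_le_right (by positivity) p.one_le_norm_one_add_inv)

lemma summable_hFactor_sub_one (n : ℕ) {s : ℂ} (hs : -1 + (2 : ℝ) ^ (-(n : ℝ)) < s.re) :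
    Summable fun p : Nat.Primes => hFactor n s p - 1 := by
  have hpow : (2 : ℝ) ^ n * (2 : ℝ) ^ (-(n : ℝ)) = 1 := by
    rw [Real.rpow_neg zero_le_two, Real.rpow_natCast, mul_inv_cancel₀ (by positivity)]
  have hs_add_one : 0 < s.re + 1 := by linarith [Real.rpow_pos_of_pos two_pos (-(n : ℝ))]
  have hlast : 1 < ((2 : ℂ) ^ n * s + (2 : ℂ) ^ n).re := by
    have hre : ((2 : ℂ) ^ n * s + (2 : ℂ) ^ n).re = (2 : ℝ) ^ n * (s.re + 1) := by
      rw [← ofReal_ofNat, ← ofReal_pow, add_re, re_ofReal_mul, ofReal_re]; ring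
    rw [hre, ← hpow]
    gcongr
    linarith
  have hfirst (m : ℕ) (hm : m ∈ Finset.Icc 1 (2 ^ n - 1)) : 1 < ((m : ℂ) * s + m + 1).re := by
    have hm1 : (1 : ℝ) ≤ m := by exact_mod_cast (Finset.mem_Icc.mp hm).1
    have hre : ((m : ℂ) * s + m + 1).re = m * (s.re + 1) + 1 := by
      rw [← ofReal_natCast, add_re, add_re, re_ofReal_mul, ofReal_re, one_re]; ring
    rw [hre]
    nlinarith
  have hterms := (summable_sum fun m hm => Nat.Primes.summable_one_div_cpow_mul_one_add_inv
    (hfirst m hm)).sub (Nat.Primes.summable_one_div_cpow_mul_one_add_inv hlast)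
  refine hterms.congr fun p => ?_
  simp only [hFactor]
  ring

theorem hn_product_converges_general (n : ℕ) (s : ℂ)
    (hs : -1 + (2 : ℝ) ^ (-(n : ℝ)) < s.re) :
    Summable (fun p : Nat.Primes => ‖hFactor n s p - 1‖) ∧
      Multipliable (fun p : Nat.Primes => hFactor n s p) := by
  have hsum := summable_hFactor_sub_one n hs
  refine ⟨hsum.norm, ?_⟩
  simpa using Complex.multipliable_one_add_of_summable hsum

theorem hn_product_converges (n : ℕ) (hn : 1 ≤ n) (s : ℂ)
    (hs : -1 + (2 : ℝ) ^ (-(n : ℝ)) < s.re) :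
    Summable (fun p : Nat.Primes => ‖hFactor n s p - 1‖) ∧
      Multipliable (fun p : Nat.Primes => hFactor n s p) :=
  hn_product_converges_general n s hs
end

section
/- For every real δ with 0 < δ < 1/8 and every real t, and every integer n with 2^n > 2/δ, the bound |h_n(−1+δ+it)| ≤ exp(C/δ) holds with an absolute constant C > 0, where h_n(s) = ∏_p (1 + ∑_{m=1}^{2^n−1} 1/(p^{ms+m+1}(1+1/p)) − 1/(p^{2^n s+2^n}(1+1/p))). -/
open Complex

noncomputable def hFun (n : ℕ) (s : ℂ) : ℂ := ∏' p : Nat.Primes, hFactor n s p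

/-!
On `Re s = -1 + δ` the factor at `p` differs from `1` by at most
`∑_{m < 2^n} p^{-(1+mδ)} + p^{-2}` (this is where `2^n δ ≥ 2` enters), so
`|h_n(s)| ≤ exp (∑_{m < 2^n} P(1+mδ) + P(2))`, with `P(σ) = ∑_p p^{-σ}` the prime zeta function.
The Euler product gives `P(σ) ≤ log ζ(σ) ≤ log (1 + 1/(σ-1))`, hence `P(1+x) ≤ 2/√x`, while
`P(1+x) ≤ 2^{1-x}` for `x ≥ 1`. Summing `2/√(mδ)` over `m ≤ 1/δ` and the geometric tail over
`m > 1/δ` gives `O(1/δ)`, uniformly in `n`.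
-/

theorem norm_tprod_le_exp_tsum {ι R : Type*} [NormedCommRing R] [NormOneClass R] {f : ι → R}
    {a : ι → ℝ} (hfa : ∀ i, ‖f i - 1‖ ≤ a i) (ha : Summable a) :
    ‖∏' i, f i‖ ≤ Real.exp (∑' i, a i) := by
  have ha0 : ∀ i, 0 ≤ a i := fun i => (norm_nonneg _).trans (hfa i)
  have hfin : ∀ s : Finset ι, ‖∏ i ∈ s, f i‖ ≤ Real.exp (∑' i, a i) := fun s =>
    calc ‖∏ i ∈ s, f i‖ ≤ ∏ i ∈ s, ‖f i‖ := Finset.norm_prod_le s f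
      _ ≤ ∏ i ∈ s, Real.exp (a i) := by
        refine Finset.prod_le_prod (fun i _ => norm_nonneg _) fun i _ => ?_
        calc ‖f i‖ ≤ ‖(1 : R)‖ + ‖f i - 1‖ := norm_le_norm_add_norm_sub' _ _
          _ ≤ a i + 1 := by rw [norm_one]; linarith [hfa i]
          _ ≤ Real.exp (a i) := Real.add_one_le_exp _
      _ = Real.exp (∑ i ∈ s, a i) := (Real.exp_sum s a).symm
      _ ≤ Real.exp (∑' i, a i) := Real.exp_le_exp.2 (ha.sum_le_tsum s fun i _ => ha0 i)
  by_cases hf : Multipliable f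
  · exact le_of_tendsto' ((continuous_norm.tendsto _).comp hf.hasProd) hfin
  · rw [tprod_eq_one_of_not_multipliable hf, norm_one]
    exact Real.one_le_exp (tsum_nonneg ha0)

lemma norm_one_div_natCast_cpow_mul_le {p : ℕ} (hp : 0 < p) (z : ℂ) :
    ‖1 / ((p : ℂ) ^ z * (1 + 1 / (p : ℂ)))‖ ≤ (p : ℝ) ^ (-z.re) := by
  have hp' : (0 : ℝ) < p := Nat.cast_pos.2 hp
  have h1 : (1 : ℝ) ≤ ‖1 + 1 / (p : ℂ)‖ := by
    rw [show (1 : ℂ) + 1 / (p : ℂ) = ((1 + 1 / (p : ℝ) : ℝ) : ℂ) by push_cast; rfl,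
      Complex.norm_of_nonneg (by positivity)]
    exact le_add_of_nonneg_right (by positivity)
  rw [norm_div, norm_one, norm_mul, norm_natCast_cpow_of_pos hp, Real.rpow_neg hp'.le, ← one_div]
  exact one_div_le_one_div_of_le (by positivity) (le_mul_of_one_le_right (by positivity) h1)

lemma norm_hFactor_sub_one_le (n : ℕ) (s : ℂ) (p : Nat.Primes) :
    ‖hFactor n s p - 1‖ ≤ (∑ m ∈ Finset.Icc 1 (2 ^ n - 1 : ℕ),
        (p : ℝ) ^ (-(m * (s.re + 1) + 1))) + (p : ℝ) ^ (-(2 ^ n * (s.re + 1))) := by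
  have hp := p.prop.pos
  rw [hFactor, add_sub_assoc, add_sub_cancel_left]
  refine (norm_sub_le _ _).trans (add_le_add ((norm_sum_le _ _).trans
    (Finset.sum_le_sum fun m _ => ?_)) ?_)
  · refine (norm_one_div_natCast_cpow_mul_le hp _).trans_eq ?_
    congr 2
    simp only [add_re, mul_re, natCast_re, natCast_im, one_re, zero_mul, sub_zero]
    ring
  · refine (norm_one_div_natCast_cpow_mul_le hp _).trans_eq ?_
    congr 2
    rw [← ofReal_ofNat, ← ofReal_pow, add_re, re_ofReal_mul, ofReal_re]
    ring

noncomputable def primeZeta (σ : ℝ) : ℝ := ∑' p : Nat.Primes, (p : ℝ) ^ (-σ)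

lemma summable_primes_rpow_neg {σ : ℝ} (hσ : 1 < σ) :
    Summable fun p : Nat.Primes => (p : ℝ) ^ (-σ) :=
  Nat.Primes.summable_rpow.2 (neg_lt_neg hσ)

lemma primes_rpow_neg_lt_one {σ : ℝ} (hσ : 0 < σ) (p : Nat.Primes) : (p : ℝ) ^ (-σ) < 1 :=
  Real.rpow_lt_one_of_one_lt_of_neg (by exact_mod_cast p.prop.one_lt) (neg_neg_of_pos hσ)

lemma norm_riemannZeta_ofReal_le {σ : ℝ} (hσ : 1 < σ) : ‖riemannZeta σ‖ ≤ 1 + (σ - 1)⁻¹ := by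
  have hζ : riemannZeta σ = ((∑' n : ℕ, 1 / (n + 1 : ℝ) ^ σ : ℝ) : ℂ) := by
    rw [zeta_eq_tsum_one_div_nat_add_one_cpow (by simpa using hσ), Complex.ofReal_tsum]
    congr 1 with n
    rw [Complex.ofReal_div, Complex.ofReal_cpow (by positivity)]
    norm_cast
  have hterm : 0 ≤ σ * ZetaAsymptotics.termTSum σ := mul_nonneg (by linarith)
    (tsum_nonneg fun n => ZetaAsymptotics.term_nonneg (n + 1) σ)
  have hdiff := ZetaAsymptotics.zeta_limit_aux1 hσ
  rw [hζ, Complex.norm_real, Real.norm_of_nonneg (tsum_nonneg fun n => by positivity), ← one_div]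
  linarith

lemma exp_tsum_neg_log_one_sub_primes_rpow {σ : ℝ} (hσ : 1 < σ) :
    Real.exp (∑' p : Nat.Primes, -Real.log (1 - (p : ℝ) ^ (-σ))) = ‖riemannZeta σ‖ := by
  have hterm : ∀ p : Nat.Primes, -Complex.log (1 - (p : ℂ) ^ (-(σ : ℂ)))
      = ((-Real.log (1 - (p : ℝ) ^ (-σ)) : ℝ) : ℂ) := fun p => by
    rw [Complex.ofReal_neg, Complex.ofReal_log (sub_nonneg.2 (primes_rpow_neg_lt_one
      (by linarith) p).le), Complex.ofReal_sub, Complex.ofReal_one,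
      Complex.ofReal_cpow (by positivity)]
    push_cast; rfl
  rw [← riemannZeta_eulerProduct_exp_log (by simpa using hσ), funext hterm,
    ← Complex.ofReal_tsum, ← Complex.ofReal_exp, Complex.norm_real,
    Real.norm_of_nonneg (Real.exp_pos _).le]

lemma primeZeta_le_log {σ : ℝ} (hσ : 1 < σ) : primeZeta σ ≤ Real.log (1 + (σ - 1)⁻¹) := by
  have hlt := primes_rpow_neg_lt_one (by linarith : 0 < σ)
  have hsum := summable_primes_rpow_neg hσ
  calc primeZeta σ ≤ ∑' p : Nat.Primes, -Real.log (1 - (p : ℝ) ^ (-σ)) := by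
        refine hsum.tsum_le_tsum (fun p => ?_)
          (Real.summable_log_one_add_of_summable hsum.neg).neg
        have := Real.log_le_sub_one_of_pos (sub_pos.2 (hlt p))
        linarith
    _ = Real.log ‖riemannZeta σ‖ := by
        rw [← exp_tsum_neg_log_one_sub_primes_rpow hσ, Real.log_exp]
    _ ≤ Real.log (1 + (σ - 1)⁻¹) := by
        refine Real.log_le_log ?_ (norm_riemannZeta_ofReal_le hσ)
        rw [← exp_tsum_neg_log_one_sub_primes_rpow hσ]
        exact Real.exp_pos _

lemma Real.log_one_add_le_two_sqrt {x : ℝ} (hx : 0 ≤ x) : Real.log (1 + x) ≤ 2 * √x := by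
  rw [Real.log_le_iff_le_exp (by linarith), mul_comm, Real.exp_mul, Real.rpow_two]
  calc 1 + x ≤ (1 + √x) ^ 2 := by nlinarith [Real.sq_sqrt hx, Real.sqrt_nonneg x]
    _ ≤ Real.exp √x ^ 2 := by gcongr; linarith [Real.add_one_le_exp √x]

lemma primeZeta_add_le {σ y : ℝ} (hσ : 1 < σ) (hy : 0 ≤ y) :
    primeZeta (σ + y) ≤ 2 ^ (-y) * primeZeta σ := by
  have hsum := summable_primes_rpow_neg hσ
  rw [primeZeta, primeZeta, ← tsum_mul_left]
  refine (summable_primes_rpow_neg (by linarith)).tsum_le_tsum (fun p => ?_) (hsum.mul_left _)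
  have hp : (2 : ℝ) ≤ p := by exact_mod_cast p.prop.two_le
  rw [neg_add', Real.rpow_sub (by linarith), div_eq_mul_inv, ← Real.rpow_neg (by linarith),
    mul_comm]
  exact mul_le_mul_of_nonneg_right (Real.rpow_le_rpow_of_nonpos two_pos hp (neg_nonpos.2 hy))
    (by positivity)

lemma primeZeta_two_lt_one : primeZeta 2 < 1 := by
  have := primeZeta_le_log one_lt_two
  norm_num at this
  linarith [Real.log_two_lt_d9]

lemma primeZeta_add_one_le_two_div_sqrt {x : ℝ} (hx : 0 < x) : primeZeta (x + 1) ≤ 2 / √x := by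
  calc primeZeta (x + 1) ≤ Real.log (1 + x⁻¹) := by
        simpa using primeZeta_le_log (by linarith : 1 < x + 1)
    _ ≤ 2 * √x⁻¹ := Real.log_one_add_le_two_sqrt (by positivity)
    _ = 2 / √x := by rw [Real.sqrt_inv, div_eq_mul_inv]

lemma primeZeta_add_one_le_two_mul_rpow {x : ℝ} (hx : 1 ≤ x) :
    primeZeta (x + 1) ≤ 2 * 2 ^ (-x) := by
  calc primeZeta (x + 1) = primeZeta (2 + (x - 1)) := by ring_nf
    _ ≤ 2 ^ (-(x - 1)) * primeZeta 2 := primeZeta_add_le one_lt_two (by linarith)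
    _ ≤ 2 ^ (-(x - 1)) := mul_le_of_le_one_right (by positivity) primeZeta_two_lt_one.le
    _ = 2 * 2 ^ (-x) := by
        rw [neg_sub, Real.rpow_sub two_pos, Real.rpow_one, Real.rpow_neg zero_le_two]; ring

lemma sum_Icc_one_div_sqrt_le (M : ℕ) : ∑ m ∈ Finset.Icc 1 M, 1 / √m ≤ 2 * √M := by
  induction M with
  | zero => simp
  | succ M ih =>
    rw [Finset.sum_Icc_succ_top (by omega), Nat.cast_succ]
    have hM : 0 < √(M + 1 : ℝ) := Real.sqrt_pos.2 (by positivity)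
    have hstep : 1 / √(M + 1 : ℝ) ≤ 2 * √(M + 1) - 2 * √M := by
      rw [div_le_iff₀ hM]
      nlinarith [Real.sq_sqrt (Nat.cast_nonneg M), Real.sq_sqrt (by positivity : (0 : ℝ) ≤ M + 1),
        sq_nonneg (√(M + 1 : ℝ) - √M)]
    linarith

lemma sum_Icc_two_rpow_neg_mul_le {δ : ℝ} (hδ : 0 < δ) (N : ℕ) :
    ∑ m ∈ Finset.Icc 1 N, (2 : ℝ) ^ (-(m * δ)) ≤ 2 / δ := by
  set r : ℝ := 2 ^ (-δ)
  have hr : r < 1 := Real.rpow_lt_one_of_one_lt_of_neg one_lt_two (neg_neg_of_pos hδ)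
  have hpow : ∀ m : ℕ, (2 : ℝ) ^ (-(m * δ)) = r ^ m := fun m => by
    rw [← Real.rpow_natCast, ← Real.rpow_mul zero_le_two]; ring_nf
  have hbern : δ / 2 ≤ 2 ^ δ - 1 := by
    have := Real.add_one_le_exp (Real.log 2 * δ)
    rw [← Real.rpow_def_of_pos two_pos] at this
    nlinarith [Real.log_two_gt_d9]
  calc ∑ m ∈ Finset.Icc 1 N, (2 : ℝ) ^ (-(m * δ)) = ∑ m ∈ Finset.Ico 1 (N + 1), r ^ m := by
        simp only [hpow, Finset.Ico_add_one_right_eq_Icc]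
    _ ≤ r ^ 1 / (1 - r) := geom_sum_Ico_le_of_lt_one (by positivity) hr
    _ = 1 / (2 ^ δ - 1) := by
        have h1 : (1 : ℝ) < 2 ^ δ := Real.one_lt_rpow one_lt_two hδ
        rw [pow_one, show r = (2 ^ δ)⁻¹ from Real.rpow_neg zero_le_two δ]
        field_simp [(sub_pos.2 h1).ne']
    _ ≤ 2 / δ := by
        rw [div_le_div_iff₀ (by linarith) hδ]; linarith

lemma sum_Icc_floor_inv_two_div_sqrt_mul_le {δ : ℝ} (hδ : 0 < δ) :
    ∑ m ∈ Finset.Icc 1 ⌊δ⁻¹⌋₊, 2 / √(m * δ) ≤ 4 / δ := by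
  calc ∑ m ∈ Finset.Icc 1 ⌊δ⁻¹⌋₊, 2 / √(m * δ)
      = 2 / √δ * ∑ m ∈ Finset.Icc 1 ⌊δ⁻¹⌋₊, 1 / √m := by
        rw [Finset.mul_sum]
        refine Finset.sum_congr rfl fun m _ => ?_
        rw [Real.sqrt_mul (Nat.cast_nonneg m)]
        ring
    _ ≤ 2 / √δ * (2 * √δ⁻¹) := by
        gcongr
        exact (sum_Icc_one_div_sqrt_le _).trans
          (by gcongr; exact Nat.floor_le (inv_nonneg.2 hδ.le))
    _ = 4 / δ := by
        rw [Real.sqrt_inv]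
        field_simp
        rw [Real.sq_sqrt hδ.le]
        ring

lemma sum_Icc_primeZeta_mul_add_one_le {δ : ℝ} (hδ : 0 < δ) (N : ℕ) :
    ∑ m ∈ Finset.Icc 1 N, primeZeta (m * δ + 1) ≤ 8 / δ := by
  set M := ⌊δ⁻¹⌋₊
  have hterm : ∀ m ∈ Finset.Icc 1 N, primeZeta (m * δ + 1)
      ≤ (if m ≤ M then 2 / √(m * δ) else 0) + 2 * 2 ^ (-(m * δ)) := by
    intro m hm
    have hm0 : (0 : ℝ) < m := by exact_mod_cast (Finset.mem_Icc.1 hm).1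
    split_ifs with hmM
    · exact (primeZeta_add_one_le_two_div_sqrt (by positivity)).trans
        (le_add_of_nonneg_right (by positivity))
    · rw [zero_add]
      refine primeZeta_add_one_le_two_mul_rpow ?_
      have := (Nat.floor_lt (inv_nonneg.2 hδ.le)).1 (not_le.1 hmM)
      rw [inv_lt_iff_one_lt_mul₀ hδ] at this
      linarith
  have hsmall : ∑ m ∈ Finset.Icc 1 N, (if m ≤ M then 2 / √(m * δ) else 0) ≤ 4 / δ := by
    rw [← Finset.sum_filter]
    refine (Finset.sum_le_sum_of_subset_of_nonneg (fun m hm => ?_) fun m _ _ => by positivity).trans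
      (sum_Icc_floor_inv_two_div_sqrt_mul_le hδ)
    simp only [Finset.mem_filter, Finset.mem_Icc] at hm ⊢
    exact ⟨hm.1.1, hm.2⟩
  calc ∑ m ∈ Finset.Icc 1 N, primeZeta (m * δ + 1)
      ≤ ∑ m ∈ Finset.Icc 1 N, ((if m ≤ M then 2 / √(m * δ) else 0) + 2 * 2 ^ (-(m * δ))) :=
        Finset.sum_le_sum hterm
    _ = ∑ m ∈ Finset.Icc 1 N, (if m ≤ M then 2 / √(m * δ) else 0)
          + 2 * ∑ m ∈ Finset.Icc 1 N, (2 : ℝ) ^ (-(m * δ)) := by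
        rw [Finset.sum_add_distrib, Finset.mul_sum]
    _ ≤ 4 / δ + 2 * (2 / δ) := by gcongr; exact sum_Icc_two_rpow_neg_mul_le hδ N
    _ = 8 / δ := by ring

lemma norm_hFun_le_exp {n : ℕ} {s : ℂ} {δ : ℝ} (hδ : 0 < δ) (hs : s.re + 1 = δ)
    (h2 : 2 ≤ 2 ^ n * δ) :
    ‖hFun n s‖ ≤ Real.exp (∑ m ∈ Finset.Icc 1 (2 ^ n - 1 : ℕ), primeZeta (m * δ + 1)
      + primeZeta 2) := by
  have hsum_m : ∀ m ∈ Finset.Icc 1 (2 ^ n - 1 : ℕ),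
      Summable fun p : Nat.Primes => (p : ℝ) ^ (-(m * δ + 1)) := fun m hm => by
    have : (1 : ℝ) ≤ m := by exact_mod_cast (Finset.mem_Icc.1 hm).1
    exact summable_primes_rpow_neg (by nlinarith)
  have hsum2 := summable_primes_rpow_neg one_lt_two
  have hfa : ∀ p : Nat.Primes, ‖hFactor n s p - 1‖
      ≤ (∑ m ∈ Finset.Icc 1 (2 ^ n - 1 : ℕ), (p : ℝ) ^ (-(m * δ + 1))) + (p : ℝ) ^ (-2 : ℝ) :=
    fun p => by
      have hp : (1 : ℝ) ≤ p := by exact_mod_cast p.prop.one_lt.le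
      have h := norm_hFactor_sub_one_le n s p
      rw [hs] at h
      exact h.trans (add_le_add le_rfl (Real.rpow_le_rpow_of_exponent_le hp (by linarith)))
  refine (norm_tprod_le_exp_tsum hfa ((summable_sum hsum_m).add hsum2)).trans_eq ?_
  rw [(summable_sum hsum_m).tsum_add hsum2, Summable.tsum_finsetSum hsum_m]
  rfl

theorem hn_bound :
    ∃ C : ℝ, 0 < C ∧ ∀ δ t : ℝ, 0 < δ → δ < 1 / 8 → ∀ n : ℕ,
      2 / δ < (2 : ℝ) ^ n →
      ‖hFun n (-1 + δ + t * I)‖ ≤ Real.exp (C / δ) := by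
  refine ⟨9, by norm_num, fun δ t hδ hδ8 n hn => ?_⟩
  have h2 : (2 : ℝ) ≤ 2 ^ n * δ := by rw [div_lt_iff₀ hδ] at hn; linarith
  refine (norm_hFun_le_exp hδ (by simp) h2).trans (Real.exp_le_exp.2 ?_)
  have hδ1 : 1 ≤ 1 / δ := by rw [le_div_iff₀ hδ]; linarith
  calc _ ≤ 8 / δ + 1 / δ := add_le_add (sum_Icc_primeZeta_mul_add_one_le hδ _)
        (primeZeta_two_lt_one.le.trans hδ1)
    _ = 9 / δ := by ring
end
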